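/- Let 3 ≤ k ≤ n and n-k+3 ≤ j ≤ n. Then the word B = W_{n-k+2}^(k) k (the word W_{n-k+2}^(k) followed by the single digit k) is not a factor of W_j^(k). -/

import Mathlib

def kbon (k : ℕ) (n : ℕ) : ℕ :=
  if _h1 : n < k - 1 then 0
  else if _h2 : n = k - 1 then 1
  else ∑ i ∈ Finset.range k, kbon k (n - i - 1)
termination_by n
decreasing_by omega

/-- The k-bonacci morphism on words over ℕ. -/
def phiW (k : ℕ) (w : List ℕ) : List ℕ :=
  w.flatMap (fun a => if a % k = k - 1 then [a + 1] else [k * (a / k), a + 1])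

/-- The finite k-bonacci word over the infinite alphabet ℕ. -/
def W (k n : ℕ) : List ℕ := (phiW k)^[n] [0]

/-!
Letters divisible by `k` are exactly the first letters of the image blocks `φ_k(a)`, and the last
letter of `φ_k(a)` is `a + 1`; hence `φ_k` is injective and a factor of `φ_k(w)` that starts and
ends at block boundaries desubstitutes to a factor of `w`. An occurrence of `W_μ k` in `W_{μ+t}`
(`t ≤ k - 2`) therefore desubstitutes to an occurrence of `W_{μ-1} b` in `W_{μ+t-1}` with
`φ_k(b)` starting with `k`. If `b = k` we descend one level. Otherwise `(μ-1) b = φ_k(a)` is a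
block, which forces `μ - 1 = k ≤ a`; as `W_k` ends in `0 1 k`, the factor `φ_k(0 a)` desubstitutes
to `0 a` in `W_{μ+t-2}`, while in any image of `φ_k` a `0` is followed by a letter `< k`. At the bottom, `μ + t < k` and the letter `k`
does not occur at all.
-/

def block (k a : ℕ) : List ℕ := if a % k = k - 1 then [a + 1] else [k * (a / k), a + 1]

section KBonacci

variable {k : ℕ}

@[simp]
lemma phiW_nil : phiW k [] = [] := rfl

lemma phiW_cons (a : ℕ) (w : List ℕ) : phiW k (a :: w) = block k a ++ phiW k w := rfl

lemma phiW_append (u v : List ℕ) : phiW k (u ++ v) = phiW k u ++ phiW k v :=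
  List.flatMap_append

lemma succ_mod_eq_zero_iff (hk : 0 < k) {a : ℕ} : (a + 1) % k = 0 ↔ a % k = k - 1 := by
  have hr := Nat.mod_lt a hk
  have ha : a + 1 = k * (a / k) + (a % k + 1) := by have := Nat.div_add_mod a k; omega
  rw [ha, Nat.mul_add_mod]
  rcases (by omega : a % k + 1 < k ∨ a % k + 1 = k) with h | h
  · rw [Nat.mod_eq_of_lt h]; omega
  · rw [h, Nat.mod_self]; omega

lemma block_zero (hk : 1 < k) : block k 0 = [0, 1] := by
  rw [block, Nat.zero_mod, if_neg (by omega)]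
  simp

lemma block_eq_pair {a x y : ℕ} (h : block k a = [x, y]) :
    a % k ≠ k - 1 ∧ x = k * (a / k) ∧ y = a + 1 := by
  unfold block at h
  split_ifs at h with ha
  · simp at h
  · simp only [List.cons.injEq, and_true] at h
    exact ⟨ha, h.1.symm, h.2.symm⟩

lemma mod_eq_zero_of_mem_head?_phiW (hk : 0 < k) {w : List ℕ} :
    ∀ c ∈ (phiW k w).head?, c % k = 0 := by
  cases w with
  | nil => simp
  | cons a w =>
    rw [phiW_cons, block]
    split_ifs with ha <;> simp [ha, succ_mod_eq_zero_iff hk]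

-- Either `[x, y]` is an image block, or `x` ends a block and `y` starts the next one.
lemma pair_infix_phiW (hk : 0 < k) {x y : ℕ} {w : List ℕ} (h : [x, y] <:+: phiW k w) :
    (∃ a, block k a = [x, y]) ∨ (0 < x ∧ y % k = 0) := by
  induction w with
  | nil => simp at h
  | cons a w ih =>
    have hend : [x, y] <+: (a + 1) :: phiW k w → 0 < x ∧ y % k = 0 := by
      intro hp
      obtain ⟨rfl, t, ht⟩ := List.cons_prefix_cons.1 hp
      exact ⟨a.succ_pos, mod_eq_zero_of_mem_head?_phiW hk (w := w) y (by simp [← ht])⟩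
    rw [phiW_cons] at h
    unfold block at h
    split_ifs at h with ha
    · rcases List.infix_cons_iff.1 h with hp | hi
      · exact .inr (hend hp)
      · exact ih hi
    · rcases List.infix_cons_iff.1 h with hp | hi
      · obtain ⟨rfl, hy⟩ := List.cons_prefix_cons.1 hp
        obtain ⟨rfl, -⟩ := List.cons_prefix_cons.1 hy
        exact .inl ⟨a, by simp [block, ha]⟩
      · rcases List.infix_cons_iff.1 hi with hp | hi
        · exact .inr (hend hp)
        · exact ih hi

lemma exists_block_eq_of_pair_infix_phiW (hk : 0 < k) {x y : ℕ} {w : List ℕ}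
    (h : [x, y] <:+: phiW k w) (hy : y % k ≠ 0) : ∃ a, block k a = [x, y] :=
  (pair_infix_phiW hk h).resolve_right fun h => hy h.2

lemma lt_of_zero_pair_infix_phiW (hk : 0 < k) {y : ℕ} {w : List ℕ}
    (h : [0, y] <:+: phiW k w) : y < k := by
  rcases pair_infix_phiW hk h with ⟨a, ha⟩ | ⟨h0, -⟩
  · obtain ⟨ha, h0, rfl⟩ := block_eq_pair ha
    have := Nat.div_add_mod a k
    have := Nat.mod_lt a hk
    omega
  · omega

-- Cutting `φ_k(w)` just before a multiple of `k` cuts it at a block boundary.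
lemma phiW_eq_append (hk : 0 < k) {w s v : List ℕ} (h : phiW k w = s ++ v)
    (hv : ∀ c ∈ v.head?, c % k = 0) :
    ∃ w₁ w₂, w = w₁ ++ w₂ ∧ phiW k w₁ = s ∧ phiW k w₂ = v := by
  induction w generalizing s with
  | nil =>
    obtain ⟨rfl, rfl⟩ := List.append_eq_nil_iff.1 h.symm
    exact ⟨[], [], rfl, rfl, rfl⟩
  | cons a w ih =>
    rcases s with _ | ⟨z, s⟩
    · exact ⟨[], a :: w, rfl, rfl, h⟩
    rw [phiW_cons, block] at h
    split_ifs at h with ha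
    · simp only [List.cons_append, List.nil_append, List.cons.injEq] at h
      obtain ⟨w₁, w₂, rfl, rfl, rfl⟩ := ih h.2
      exact ⟨a :: w₁, w₂, rfl, by simp [phiW_cons, block, ha, h.1], rfl⟩
    · rcases s with _ | ⟨z', s⟩
      · simp only [List.cons_append, List.nil_append, List.cons.injEq] at h
        have := hv (a + 1) (by simp [← h.2])
        exact absurd ((succ_mod_eq_zero_iff hk).1 this) ha
      · simp only [List.cons_append, List.cons.injEq] at h
        obtain ⟨w₁, w₂, rfl, rfl, rfl⟩ := ih h.2.2
        exact ⟨a :: w₁, w₂, rfl, by simp [phiW_cons, block, ha, h.1, h.2.1], rfl⟩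

lemma phiW_injective (hk : 0 < k) : Function.Injective (phiW k) := by
  intro u
  induction u with
  | nil =>
    rintro (_ | ⟨b, v⟩) h
    · rfl
    · rw [phiW_cons, block] at h
      split_ifs at h <;> simp at h
  | cons a u ih =>
    rintro (_ | ⟨b, v⟩) h
    · rw [phiW_cons, block] at h
      split_ifs at h <;> simp at h
    · rw [phiW_cons, phiW_cons, block, block] at h
      split_ifs at h with ha hb hb <;> simp only [List.cons_append, List.nil_append,
        List.cons.injEq] at h
      · rw [ih h.2, show a = b by omega]
      · have := mod_eq_zero_of_mem_head?_phiW hk (w := u) (b + 1) (by simp [h.2])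
        exact absurd ((succ_mod_eq_zero_iff hk).1 this) hb
      · have := mod_eq_zero_of_mem_head?_phiW hk (w := v) (a + 1) (by simp [← h.2])
        exact absurd ((succ_mod_eq_zero_iff hk).1 this) ha
      · rw [ih h.2.2, show a = b by omega]

lemma exists_eq_append_of_append_phiW_append (hk : 0 < k) {s u v w : List ℕ}
    (h : s ++ phiW k u ++ v = phiW k w) (hv : ∀ c ∈ v.head?, c % k = 0) :
    ∃ w₁ w₂, w = w₁ ++ u ++ w₂ ∧ phiW k w₂ = v := by
  obtain ⟨w', w₂, rfl, h₁, h₂⟩ := phiW_eq_append hk h.symm hv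
  obtain ⟨w₁, u', rfl, -, hu⟩ := phiW_eq_append hk h₁ (mod_eq_zero_of_mem_head?_phiW hk)
  exact ⟨w₁, w₂, by rw [phiW_injective hk hu], h₂⟩

lemma exists_block_append_infix_of_phiW_append_infix (hk : 0 < k) {u w : List ℕ} {c : ℕ}
    (h : phiW k u ++ [c] <:+: phiW k w) (hc : c % k = 0) :
    ∃ b r, block k b = c :: r ∧ u ++ [b] <:+: w := by
  obtain ⟨s, t, h⟩ := h
  obtain ⟨w₁, _ | ⟨b, w₂⟩, rfl, h₂⟩ :=
    exists_eq_append_of_append_phiW_append hk (v := c :: t) (by simpa using h) (by simpa)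
  · simp at h₂
  obtain ⟨d, r, hd⟩ : ∃ d r, block k b = d :: r := by
    unfold block; split_ifs <;> simp
  rw [phiW_cons, hd, List.cons_append, List.cons.injEq] at h₂
  exact ⟨b, r, h₂.1 ▸ hd, w₁, w₂, by simp⟩

lemma append_singleton_infix_of_phiW_infix (hk : 0 < k) {u w : List ℕ} {x : ℕ}
    (hx : x % k ≠ k - 1) (h : phiW k (u ++ [x]) <:+: phiW k w) : u ++ [x] <:+: w := by
  obtain ⟨s, t, h⟩ := h
  have hlast : phiW k (u ++ [x]) = phiW k u ++ [k * (x / k), x + 1] := by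
    simp [phiW_append, phiW_cons, block, hx]
  have ht : ∀ c ∈ t.head?, c % k = 0 := by
    rcases t with _ | ⟨c, t⟩
    · simp
    intro c' hc'
    obtain rfl : c = c' := by simpa using hc'
    by_contra hc
    have hpair : [x + 1, c] <:+: phiW k w :=
      ⟨s ++ phiW k u ++ [k * (x / k)], t, by rw [← h, hlast]; simp⟩
    obtain ⟨a, ha⟩ := exists_block_eq_of_pair_infix_phiW hk hpair hc
    obtain ⟨-, hxa, -⟩ := block_eq_pair ha
    exact hx ((succ_mod_eq_zero_iff hk).1 (by rw [hxa, Nat.mul_mod_right]))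
  obtain ⟨w₁, w₂, rfl, -⟩ := exists_eq_append_of_append_phiW_append hk h ht
  exact ⟨w₁, w₂, rfl⟩

@[simp]
lemma W_zero : W k 0 = [0] := rfl

lemma W_succ (n : ℕ) : W k (n + 1) = phiW k (W k n) :=
  Function.iterate_succ_apply' _ _ _

lemma exists_W_eq_append_singleton (n : ℕ) : ∃ p, W k n = p ++ [n] := by
  induction n with
  | zero => exact ⟨[], rfl⟩
  | succ n ih =>
    obtain ⟨p, hp⟩ := ih
    rw [W_succ, hp, phiW_append, phiW_cons, phiW_nil, List.append_nil, block]
    split_ifs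
    · exact ⟨phiW k p, rfl⟩
    · exact ⟨phiW k p ++ [k * (n / k)], by simp⟩

lemma le_of_mem_W {n a : ℕ} (h : a ∈ W k n) : a ≤ n := by
  induction n generalizing a with
  | zero => simp_all
  | succ n ih =>
    rw [W_succ, phiW, List.mem_flatMap] at h
    obtain ⟨e, he, hae⟩ := h
    have := ih he
    have := Nat.mul_div_le e k
    split_ifs at hae <;> simp at hae <;> omega

lemma exists_W_eq_append_zero_self {n : ℕ} (hn : 0 < n) (hnk : n < k) :
    ∃ p, W k n = p ++ [0, n] := by
  obtain ⟨p, hp⟩ := exists_W_eq_append_singleton (k := k) (n - 1)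
  refine ⟨phiW k p, ?_⟩
  rw [show n = n - 1 + 1 by omega, W_succ, hp, phiW_append, phiW_cons, phiW_nil,
    List.append_nil, block, Nat.mod_eq_of_lt (by omega), if_neg (by omega),
    Nat.div_eq_of_lt (by omega)]
  simp

lemma exists_W_self_eq_append (hk : 1 < k) : ∃ p, W k k = p ++ [0, 1, k] := by
  obtain ⟨p, hp⟩ := exists_W_eq_append_zero_self (k := k) (n := k - 1) (by omega) (by omega)
  refine ⟨phiW k p, ?_⟩
  have hW : W k k = phiW k (W k (k - 1)) := by rw [← W_succ, Nat.sub_add_cancel hk.le]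
  rw [hW, hp, phiW_append, phiW_cons, phiW_cons, phiW_nil, List.append_nil, block_zero hk,
    block, if_pos (Nat.mod_eq_of_lt (by omega))]
  simp [Nat.sub_add_cancel hk.le]

lemma lt_two_mul_of_block_eq_cons_self {b : ℕ} {r : List ℕ} (hk : 0 < k)
    (h : block k b = k :: r) : b < 2 * k := by
  have := Nat.div_add_mod b k
  have := Nat.mod_lt b hk
  unfold block at h
  split_ifs at h <;> simp at h <;> omega

lemma eq_of_W_append_infix {m t b : ℕ} {r : List ℕ} (htk : t + 2 ≤ k)
    (hb : block k b = k :: r) (h : W k (m + 1) ++ [b] <:+: W k (m + 1 + t)) : b = k := by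
  have hk : 0 < k := by omega
  obtain ⟨p, hp⟩ := exists_W_eq_append_singleton (k := k) (m + 1)
  rw [show m + 1 + t = m + t + 1 by omega, W_succ (m + t)] at h
  have hpair : [m + 1, b] <:+: phiW k (W k (m + t)) :=
    List.IsInfix.trans ⟨p, [], by simp [hp]⟩ h
  rcases pair_infix_phiW hk hpair with ⟨a, ha⟩ | ⟨-, hb0⟩
  swap
  · have := Nat.div_add_mod b k
    unfold block at hb
    split_ifs at hb <;> simp at hb <;> omega
  -- Now `[m + 1, b]` is the block of `a = b - 1`; since `φ_k(b)` starts with `k`, `m + 1 = k`.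
  obtain ⟨ha', hm, rfl⟩ := block_eq_pair ha
  have hak : a / k = 1 := by
    refine le_antisymm (Nat.lt_succ_iff.1 ((Nat.div_lt_iff_lt_mul hk).2 ?_))
      (Nat.one_le_iff_ne_zero.2 ?_)
    · have := lt_two_mul_of_block_eq_cons_self hk hb
      omega
    · rintro h0
      simp [h0] at hm
  rw [hak, mul_one] at hm
  obtain ⟨q, hq⟩ := exists_W_self_eq_append (k := k) (by omega)
  rw [hm, hq] at h
  rw [hm] at ha
  have hφ : phiW k ([0] ++ [a]) <:+: phiW k (W k (m + t)) := by
    refine List.IsInfix.trans ⟨q, [], ?_⟩ h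
    simp [phiW_cons, block_zero (show 1 < k by omega), ha]
  have h0a := append_singleton_infix_of_phiW_infix hk ha' hφ
  rw [show m + t = m + t - 1 + 1 by omega, W_succ] at h0a
  simp [Nat.div_eq_of_lt (lt_of_zero_pair_infix_phiW hk h0a)] at hak

theorem not_W_append_infix_W {t : ℕ} (htk : t + 2 ≤ k) (μ : ℕ) :
    ¬ W k μ ++ [k] <:+: W k (μ + t) := by
  induction μ with
  | zero => exact fun h => absurd (le_of_mem_W (h.subset (by simp : k ∈ _ ++ [k]))) (by omega)
  | succ m ih =>
    intro h
    rcases m with _ | m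
    · exact absurd (le_of_mem_W (h.subset (by simp : k ∈ _ ++ [k]))) (by omega)
    rw [W_succ (m + 1), show m + 1 + 1 + t = m + 1 + t + 1 by omega, W_succ (m + 1 + t)] at h
    obtain ⟨b, r, hb, hinf⟩ :=
      exists_block_append_infix_of_phiW_append_infix (by omega) h (Nat.mod_self k)
    exact ih (eq_of_W_append_infix htk hb hinf ▸ hinf)

end KBonacci

theorem B_not_factor_general (k n j : ℕ)
    (hj1 : n - k + 3 ≤ j) (hj2 : j ≤ n) :
    ¬ (W k (n - k + 2) ++ [k]) <:+: W k j := by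
  obtain ⟨t, rfl⟩ : ∃ t, j = n - k + 2 + t := ⟨j - (n - k + 2), by omega⟩
  exact not_W_append_infix_W (by omega) _

theorem B_not_factor (k n j : ℕ) (hk : 3 ≤ k) (hkn : k ≤ n)
    (hj1 : n - k + 3 ≤ j) (hj2 : j ≤ n) :
    ¬ (W k (n - k + 2) ++ [k]) <:+: W k j :=
  B_not_factor_general k n j hj1 hj2
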